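/- Fix positive reals P and an integer K ≥ 2. Let h be a random vector in ℂ^{N_t} with E[‖h‖²] < ∞ and h ≠ 0 almost surely, and for j = 1, …, K−1 let w_j and ṽ be random vectors in ℂ^{N_t} such that, almost surely, ‖w_j‖ = 1, ‖ṽ‖ = 1, and ⟨w_j, ṽ⟩ = 0 for every j. Then E[log₂(1 + (P/K)·∑_{j=1}^{K−1} |⟨h, w_j⟩|²)] ≤ log₂(1 + P·((K−1)/K)·D), where D = E[‖h‖²·(1 − |⟨h/‖h‖, ṽ⟩|²)]. -/

import Mathlib

open MeasureTheory ProbabilityTheory Real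
open scoped ComplexInnerProductSpace

/-!
For unit vectors `w ⊥ v`, Bessel's inequality for the orthonormal pair `(w, v)` gives
`|⟨h, w⟩|² ≤ ‖h‖² − |⟨h, v⟩|²`, and the right-hand side is the distortion integrand
`‖h‖²(1 − |⟨h/‖h‖, v⟩|²)` (also at `h = 0`, where `0⁻¹ = 0` makes both sides vanish).
Summing over the `K − 1` interferers bounds the rate integrand pointwise by
`log₂(1 + P (K−1)/K · g)` with `g` the distortion integrand, and Jensen's inequality for the
concave logarithm moves the expectation inside.
-/

section InnerProduct

variable {E : Type*} [NormedAddCommGroup E] [InnerProductSpace ℂ E]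

theorem norm_sq_mul_one_sub_norm_inner_inv_norm_smul_sq (x z : E) :
    ‖x‖ ^ 2 * (1 - ‖⟪(‖x‖ : ℂ)⁻¹ • x, z⟫‖ ^ 2) = ‖x‖ ^ 2 - ‖⟪x, z⟫‖ ^ 2 := by
  rcases eq_or_ne x 0 with rfl | hx
  · simp
  have : ‖x‖ ≠ 0 := norm_ne_zero_iff.2 hx
  rw [inner_smul_left, norm_mul, Complex.norm_conj, norm_inv, Complex.norm_real, norm_norm]
  field_simp

theorem norm_inner_sq_le_norm_sq {z : E} (hz : ‖z‖ = 1) (x : E) :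
    ‖⟪x, z⟫‖ ^ 2 ≤ ‖x‖ ^ 2 := by
  have : ‖⟪x, z⟫‖ ≤ ‖x‖ := (norm_inner_le_norm x z).trans_eq (by rw [hz, mul_one])
  gcongr

theorem norm_inner_sq_add_norm_inner_sq_le {y z : E} (hy : ‖y‖ = 1) (hz : ‖z‖ = 1)
    (hyz : ⟪y, z⟫ = 0) (x : E) : ‖⟪x, y⟫‖ ^ 2 + ‖⟪x, z⟫‖ ^ 2 ≤ ‖x‖ ^ 2 := by
  have hON : Orthonormal ℂ ![y, z] := by
    rw [orthonormal_iff_ite]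
    intro i j
    fin_cases i <;> fin_cases j <;>
      simp [inner_self_eq_norm_sq_to_K, hy, hz, hyz, inner_eq_zero_symm.mp hyz]
  simpa [Fin.sum_univ_two, norm_inner_symm _ x] using
    hON.sum_inner_products_le (s := Finset.univ) x

theorem sum_norm_inner_sq_le_card_mul {ι : Type*} [Fintype ι] {w : ι → E} {z : E}
    (hw : ∀ j, ‖w j‖ = 1) (hz : ‖z‖ = 1) (hwz : ∀ j, ⟪w j, z⟫ = 0) (x : E) :
    ∑ j, ‖⟪x, w j⟫‖ ^ 2 ≤ Fintype.card ι * (‖x‖ ^ 2 - ‖⟪x, z⟫‖ ^ 2) := by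
  calc ∑ j, ‖⟪x, w j⟫‖ ^ 2 ≤ ∑ _j : ι, (‖x‖ ^ 2 - ‖⟪x, z⟫‖ ^ 2) := by
        gcongr with j
        linarith [norm_inner_sq_add_norm_inner_sq_le (hw j) hz (hwz j) x]
    _ = Fintype.card ι * (‖x‖ ^ 2 - ‖⟪x, z⟫‖ ^ 2) := by simp [mul_sub]

end InnerProduct

section Expectation

variable {Ω : Type*} [MeasurableSpace Ω] {μ : Measure Ω} {Y : Ω → ℝ}

theorem integrable_log_of_one_le (hY : Integrable Y μ) (hY1 : ∀ᵐ ω ∂μ, 1 ≤ Y ω) :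
    Integrable (fun ω => log (Y ω)) μ := by
  refine hY.mono' (measurable_log.comp_aemeasurable hY.aemeasurable).aestronglyMeasurable ?_
  filter_upwards [hY1] with ω h1
  rw [norm_of_nonneg (log_nonneg h1)]
  exact log_le_self (by linarith)

theorem integral_log_le_log_integral_of_one_le [IsProbabilityMeasure μ] (hY : Integrable Y μ)
    (hY1 : ∀ᵐ ω ∂μ, 1 ≤ Y ω) : ∫ ω, log (Y ω) ∂μ ≤ log (∫ ω, Y ω ∂μ) := by
  -- Jensen needs a closed domain, hence `Set.Ici 1` rather than `Set.Ioi 0`.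
  have hconc : ConcaveOn ℝ (Set.Ici 1) log :=
    strictConcaveOn_log_Ioi.concaveOn.subset (Set.Ici_subset_Ioi.2 one_pos) (convex_Ici 1)
  have hcont : ContinuousOn log (Set.Ici 1) :=
    continuousOn_log.mono fun _ hx => (one_pos.trans_le hx).ne'
  exact hconc.le_map_integral hcont isClosed_Ici hY1 hY (integrable_log_of_one_le hY hY1)

theorem integral_logb_le_logb_integral_of_one_le [IsProbabilityMeasure μ] {b : ℝ} (hb : 1 < b)
    (hY : Integrable Y μ) (hY1 : ∀ᵐ ω ∂μ, 1 ≤ Y ω) :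
    ∫ ω, logb b (Y ω) ∂μ ≤ logb b (∫ ω, Y ω ∂μ) := by
  simp only [logb, integral_div]
  exact div_le_div_of_nonneg_right (integral_log_le_log_integral_of_one_le hY hY1)
    (log_nonneg hb.le)

theorem integrable_norm_sq_sub_norm_inner_sq {E : Type*} [NormedAddCommGroup E]
    [InnerProductSpace ℂ E] {x z : Ω → E} (hx : AEStronglyMeasurable x μ)
    (hz : AEStronglyMeasurable z μ) (hx2 : Integrable (fun ω => ‖x ω‖ ^ 2) μ)
    (hz1 : ∀ᵐ ω ∂μ, ‖z ω‖ = 1) :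
    Integrable (fun ω => ‖x ω‖ ^ 2 - ‖⟪x ω, z ω⟫‖ ^ 2) μ := by
  refine hx2.sub (hx2.mono' ((hx.inner hz).norm.pow 2) ?_)
  filter_upwards [hz1] with ω hz1
  rw [norm_of_nonneg (by positivity)]
  exact norm_inner_sq_le_norm_sq hz1 _

end Expectation

theorem interference_le_distortion {E : Type*} [NormedAddCommGroup E] [InnerProductSpace ℂ E]
    {P : ℝ} (hP : 0 ≤ P) {K : ℕ} (hK : 1 ≤ K) {w : Fin (K - 1) → E} {z : E}
    (hw : ∀ j, ‖w j‖ = 1) (hz : ‖z‖ = 1) (hwz : ∀ j, ⟪w j, z⟫ = 0) (x : E) :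
    P / K * ∑ j, ‖⟪x, w j⟫‖ ^ 2 ≤ P * ((K - 1 : ℝ) / K) * (‖x‖ ^ 2 - ‖⟪x, z⟫‖ ^ 2) := by
  calc P / K * ∑ j, ‖⟪x, w j⟫‖ ^ 2
      ≤ P / K * ((K - 1 : ℕ) * (‖x‖ ^ 2 - ‖⟪x, z⟫‖ ^ 2)) := by
        gcongr
        simpa using sum_norm_inner_sq_le_card_mul hw hz hwz x
    _ = P * ((K - 1 : ℝ) / K) * (‖x‖ ^ 2 - ‖⟪x, z⟫‖ ^ 2) := by
        rw [Nat.cast_sub hK, Nat.cast_one]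
        ring

theorem stmt_4_general {Ω : Type*} [MeasureSpace Ω] [IsProbabilityMeasure (ℙ : Measure Ω)]
    (P : ℝ) (hP : 0 < P) (K : ℕ) (hK : 2 ≤ K) (Nt : ℕ)
    (h : Ω → EuclideanSpace ℂ (Fin Nt))
    (w : Fin (K - 1) → Ω → EuclideanSpace ℂ (Fin Nt))
    (v : Ω → EuclideanSpace ℂ (Fin Nt))
    (hmeas : AEStronglyMeasurable h ℙ)
    (hvmeas : AEStronglyMeasurable v ℙ)
    (hint : Integrable (fun ω => ‖h ω‖ ^ 2) ℙ)
    (hw1 : ∀ j, ∀ᵐ ω ∂ℙ, ‖w j ω‖ = 1)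
    (hv1 : ∀ᵐ ω ∂ℙ, ‖v ω‖ = 1)
    (horth : ∀ j, ∀ᵐ ω ∂ℙ, ⟪w j ω, v ω⟫ = (0 : ℂ))
    (D : ℝ)
    (hD : D = ∫ ω, ‖h ω‖ ^ 2 * (1 - ‖(⟪((‖h ω‖ : ℂ)⁻¹ • h ω), v ω⟫ : ℂ)‖ ^ 2) ∂ℙ) :
    ∫ ω, Real.logb 2 (1 + (P / K) * ∑ j : Fin (K - 1), ‖(⟪h ω, w j ω⟫ : ℂ)‖ ^ 2) ∂ℙ ≤
      Real.logb 2 (1 + P * ((K - 1 : ℝ) / K) * D) := by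
  set c := P * ((K - 1 : ℝ) / K)
  have hK1 : (1 : ℝ) ≤ K := by exact_mod_cast (by omega : 1 ≤ K)
  have hc : 0 ≤ c := mul_nonneg hP.le (div_nonneg (sub_nonneg.2 hK1) K.cast_nonneg)
  set g : Ω → ℝ := fun ω => ‖h ω‖ ^ 2 - ‖⟪h ω, v ω⟫‖ ^ 2
  have hDg : D = ∫ ω, g ω := by
    simp only [hD, norm_sq_mul_one_sub_norm_inner_inv_norm_smul_sq, g]
  have hg0 : ∀ᵐ ω, 0 ≤ g ω := hv1.mono fun ω hv => sub_nonneg.2 (norm_inner_sq_le_norm_sq hv _)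
  have hgi : Integrable g := integrable_norm_sq_sub_norm_inner_sq hmeas hvmeas hint hv1
  have hrate : ∀ᵐ ω, P / K * ∑ j, ‖⟪h ω, w j ω⟫‖ ^ 2 ≤ c * g ω := by
    filter_upwards [ae_all_iff.2 hw1, ae_all_iff.2 horth, hv1] with ω hw hwv hv
    exact interference_le_distortion hP.le (by omega) hw hv hwv (h ω)
  have hF0 (ω : Ω) : 0 ≤ P / K * ∑ j, ‖⟪h ω, w j ω⟫‖ ^ 2 := by positivity
  have hY1 : ∀ᵐ ω, 1 ≤ 1 + c * g ω := hg0.mono fun ω hω => le_add_of_nonneg_right (mul_nonneg hc hω)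
  have hYi : Integrable fun ω => 1 + c * g ω := (integrable_const 1).add (hgi.const_mul c)
  calc ∫ ω, logb 2 (1 + P / K * ∑ j, ‖⟪h ω, w j ω⟫‖ ^ 2)
      ≤ ∫ ω, logb 2 (1 + c * g ω) := by
        refine integral_mono_of_nonneg
          (ae_of_all _ fun ω => logb_nonneg one_lt_two (by linarith [hF0 ω]))
          ((integrable_log_of_one_le hYi hY1).div_const _) ?_
        filter_upwards [hrate] with ω hω
        exact logb_le_logb_of_le one_lt_two (by linarith [hF0 ω]) (by linarith)
    _ ≤ logb 2 (∫ ω, 1 + c * g ω) :=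
        integral_logb_le_logb_integral_of_one_le one_lt_two hYi hY1
    _ = logb 2 (1 + c * D) := by
        rw [integral_add (integrable_const 1) (hgi.const_mul c), integral_const_mul, hDg]
        simp

/-- Proposition 3.2: with `K ≥ 2` users and power `P > 0`, if the unit-norm beamforming
vectors `w j` of the other `K − 1` users are almost surely orthogonal to the unit-norm
quantized direction `v`, then the expected interference rate is bounded as
`E[log₂(1 + (P/K)·∑ⱼ |⟨h, wⱼ⟩|²)] ≤ log₂(1 + P·((K−1)/K)·D)`,
where `D = E[‖h‖²·(1 − |⟨h/‖h‖, v⟩|²)]` is the quantization distortion. -/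
theorem stmt_4 {Ω : Type*} [MeasureSpace Ω] [IsProbabilityMeasure (ℙ : Measure Ω)]
    (P : ℝ) (hP : 0 < P) (K : ℕ) (hK : 2 ≤ K) (Nt : ℕ)
    (h : Ω → EuclideanSpace ℂ (Fin Nt))
    (w : Fin (K - 1) → Ω → EuclideanSpace ℂ (Fin Nt))
    (v : Ω → EuclideanSpace ℂ (Fin Nt))
    (hmeas : AEStronglyMeasurable h ℙ) (hwmeas : ∀ j, AEStronglyMeasurable (w j) ℙ)
    (hvmeas : AEStronglyMeasurable v ℙ)
    (hint : Integrable (fun ω => ‖h ω‖ ^ 2) ℙ)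
    (hne : ∀ᵐ ω ∂ℙ, h ω ≠ 0)
    (hw1 : ∀ j, ∀ᵐ ω ∂ℙ, ‖w j ω‖ = 1)
    (hv1 : ∀ᵐ ω ∂ℙ, ‖v ω‖ = 1)
    (horth : ∀ j, ∀ᵐ ω ∂ℙ, ⟪w j ω, v ω⟫ = (0 : ℂ))
    (D : ℝ)
    (hD : D = ∫ ω, ‖h ω‖ ^ 2 * (1 - ‖(⟪((‖h ω‖ : ℂ)⁻¹ • h ω), v ω⟫ : ℂ)‖ ^ 2) ∂ℙ) :
    ∫ ω, Real.logb 2 (1 + (P / K) * ∑ j : Fin (K - 1), ‖(⟪h ω, w j ω⟫ : ℂ)‖ ^ 2) ∂ℙ ≤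
      Real.logb 2 (1 + P * ((K - 1 : ℝ) / K) * D) :=
  stmt_4_general P hP K hK Nt h w v hmeas hvmeas hint hw1 hv1 horth D hD
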